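/- arXiv:2304.11908 — 3 statements merged into one kernel-verified Lean document; each statement's English description precedes it below -/
import Mathlib

section
/- Let V and Q be real Hilbert spaces, a : V × V → ℝ a bounded symmetric bilinear form, and b : V × Q → ℝ a bounded bilinear form. Suppose a is coercive on the kernel K = {v ∈ V : b(v,q) = 0 for all q ∈ Q} with constant α > 0, and b satisfies the inf-sup condition with constant β > 0 (i.e., for every q ∈ Q there exists v ∈ V, v ≠ 0, with b(v,q) ≥ β ‖q‖_Q ‖v‖_V). Then for every f ∈ V* and g ∈ Q* the saddle point problem: find (u, λ) ∈ V × Q with a(u,v) + b(v,λ) = f(v) for all v ∈ V and b(u,q) = g(q) for all q ∈ Q, has a unique solution, and ‖u‖_V + ‖λ‖_Q ≤ C(‖f‖_{V*} + ‖g‖_{Q*}) with C depending only on α, β and the continuity constants of a and b. -/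
/-!
Represent `b` by an operator `B : V →L[ℝ] Q`, `⟪B v, q⟫ = b v q`. The inf-sup condition says
`β ‖q‖ ≤ ‖B† q‖`, so `(p, q) ↦ ⟪B† p, B† q⟫` is coercive and Lax–Milgram makes `B B†` surjective.
Hence `B` has right inverses of norm at most `1/β`, and every vector orthogonal to `ker B` lies in
the range of `B†`. A solution is built by lifting `g` to some `u₀`, correcting it by the
Lax–Milgram solution `w ∈ ker B` of `a(u₀ + w, y) = f(y)` for `y ∈ ker B`, and reading off `λ` from
the residual `f - a(u₀ + w, ·)`, which vanishes on `ker B`. For the a priori bound, split a solution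
`u` as a lift of `B u` (controlled by `‖g‖`) plus a kernel part (controlled by coercivity); then
`β ‖λ‖ ≤ ‖B† λ‖ = ‖f - a(u, ·)‖`. Uniqueness is the a priori bound applied to a difference.
-/

open InnerProductSpace RealInnerProductSpace ContinuousLinearMap
open scoped InnerProduct

lemma mul_le_of_mul_sq_le_mul {a c t : ℝ} (ht : 0 ≤ t) (hc : 0 ≤ c) (h : a * t ^ 2 ≤ c * t) :
    a * t ≤ c := by
  rcases ht.eq_or_lt with rfl | ht
  · simpa using hc
  · exact le_of_mul_le_mul_right (by linarith) ht

lemma norm_eq_of_forall_inner_eq {E : Type*} [NormedAddCommGroup E] [InnerProductSpace ℝ E]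
    {x : E} {φ : StrongDual ℝ E} (h : ∀ y, ⟪x, y⟫ = φ y) : ‖x‖ = ‖φ‖ := by
  have : innerSL ℝ x = φ := ContinuousLinearMap.ext fun y => by rw [innerSL_apply_apply, h]
  rw [← this, innerSL_apply_norm]

section

variable {V Q : Type*} [NormedAddCommGroup V] [InnerProductSpace ℝ V]
  [NormedAddCommGroup Q] [InnerProductSpace ℝ Q]

lemma LinearMap.exists_inner_apply_eq_of_bound [CompleteSpace Q] (b : V →ₗ[ℝ] Q →ₗ[ℝ] ℝ) {C : ℝ}
    (hb : ∀ v q, |b v q| ≤ C * ‖v‖ * ‖q‖) : ∃ B : V →L[ℝ] Q, ∀ v q, ⟪B v, q⟫ = b v q :=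
  ⟨((toDual ℝ Q).symm.toContinuousLinearEquiv : StrongDual ℝ Q ≃L[ℝ] Q).toContinuousLinearMap ∘L
    b.mkContinuous₂ C hb, fun _ _ => toDual_symm_apply⟩

lemma Submodule.exists_mem_forall_apply_eq_of_coercive (K : Submodule ℝ V) [CompleteSpace K]
    (A : V →L[ℝ] V →L[ℝ] ℝ) {α : ℝ} (hα : 0 < α) (hA : ∀ v ∈ K, α * ‖v‖ ^ 2 ≤ A v v)
    (F : StrongDual ℝ V) : ∃ w ∈ K, ∀ y ∈ K, A w y = F y := by
  have hcoer : IsCoercive (A.bilinearComp K.subtypeL K.subtypeL) :=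
    ⟨α, hα, fun x => by simpa [sq, mul_assoc] using hA x x.2⟩
  set w := hcoer.continuousLinearEquivOfBilin.symm ((toDual ℝ K).symm (F ∘L K.subtypeL))
  refine ⟨w, w.2, fun y hy => ?_⟩
  have := hcoer.continuousLinearEquivOfBilin_apply w ⟨y, hy⟩
  rw [ContinuousLinearEquiv.apply_symm_apply, toDual_symm_apply] at this
  exact this.symm

-- With `s = ‖f‖ + ‖g‖` and `M = (α + β + Ca) / (α β)`: `‖u‖ ≤ M s` and `‖λ‖ ≤ (1 + Ca M) s / β`.
noncomputable def saddlePointConst (α β Ca : ℝ) : ℝ :=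
  (α + β + Ca) / (α * β) * (1 + Ca / β) + 1 / β

lemma saddlePointConst_pos {α β Ca : ℝ} (hα : 0 < α) (hβ : 0 < β) (hCa : 0 ≤ Ca) :
    0 < saddlePointConst α β Ca := by
  unfold saddlePointConst; positivity

def IsSaddlePointSol (A : V →L[ℝ] V →L[ℝ] ℝ) (B : V →L[ℝ] Q) (f : StrongDual ℝ V)
    (g : StrongDual ℝ Q) (p : V × Q) : Prop :=
  (∀ v, A p.1 v + ⟪B v, p.2⟫ = f v) ∧ ∀ q, ⟪B p.1, q⟫ = g q

lemma IsSaddlePointSol.sub {A : V →L[ℝ] V →L[ℝ] ℝ} {B : V →L[ℝ] Q} {f : StrongDual ℝ V}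
    {g : StrongDual ℝ Q} {p p' : V × Q} (hp : IsSaddlePointSol A B f g p)
    (hp' : IsSaddlePointSol A B f g p') : IsSaddlePointSol A B 0 0 (p - p') := by
  refine ⟨fun v => ?_, fun q => ?_⟩
  · simp only [Prod.fst_sub, Prod.snd_sub, map_sub, sub_apply, inner_sub_right, zero_apply]
    linarith [hp.1 v, hp'.1 v]
  · simp only [Prod.fst_sub, map_sub, inner_sub_left, hp.2 q, hp'.2 q, sub_self, zero_apply]

variable [CompleteSpace V] [CompleteSpace Q]

section AdjointBoundedBelow

variable {T : V →L[ℝ] Q} {β : ℝ}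

lemma norm_adjoint_apply_ge_of_inf_sup (hT : ∀ q, ∃ v ≠ 0, β * ‖q‖ * ‖v‖ ≤ ⟪T v, q⟫) (q : Q) :
    β * ‖q‖ ≤ ‖(T†) q‖ := by
  obtain ⟨v, hv, hle⟩ := hT q
  refine le_of_mul_le_mul_right ?_ (norm_pos_iff.2 hv)
  calc β * ‖q‖ * ‖v‖ ≤ ⟪(T†) q, v⟫ := by rwa [adjoint_inner_left, real_inner_comm]
    _ ≤ ‖(T†) q‖ * ‖v‖ := real_inner_le_norm _ _

variable (hβ : 0 < β) (hT : ∀ q, β * ‖q‖ ≤ ‖(T†) q‖)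
include hβ hT

lemma isCoercive_bilinearComp_adjoint : IsCoercive ((innerSL ℝ).bilinearComp (T†) (T†)) := by
  refine ⟨β ^ 2, by positivity, fun q => ?_⟩
  rw [bilinearComp_apply, innerSL_apply_apply, real_inner_self_eq_norm_sq]
  nlinarith [hT q, mul_nonneg hβ.le (norm_nonneg q)]

lemma surjective_comp_adjoint : Function.Surjective (T ∘L T†) := by
  intro z
  set E := (isCoercive_bilinearComp_adjoint hβ hT).continuousLinearEquivOfBilin
  refine ⟨E.symm z, ext_inner_right ℝ fun q => ?_⟩
  conv_rhs => rw [← E.apply_symm_apply z]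
  rw [IsCoercive.continuousLinearEquivOfBilin_apply, bilinearComp_apply, innerSL_apply_apply,
    comp_apply, adjoint_inner_right]

lemma exists_apply_eq_and_mul_norm_le (z : Q) : ∃ v, T v = z ∧ β * ‖v‖ ≤ ‖z‖ := by
  obtain ⟨p, hp⟩ := surjective_comp_adjoint hβ hT z
  refine ⟨(T†) p, hp, mul_le_of_mul_sq_le_mul (norm_nonneg _) (norm_nonneg _) ?_⟩
  calc β * ‖(T†) p‖ ^ 2 = β * ⟪p, z⟫ := by
        rw [← hp, comp_apply, ← adjoint_inner_left, real_inner_self_eq_norm_sq]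
    _ ≤ β * ‖p‖ * ‖z‖ := by
        rw [mul_assoc]; exact mul_le_mul_of_nonneg_left (real_inner_le_norm _ _) hβ.le
    _ ≤ ‖(T†) p‖ * ‖z‖ := mul_le_mul_of_nonneg_right (hT p) (norm_nonneg _)
    _ = ‖z‖ * ‖(T†) p‖ := mul_comm _ _

lemma exists_adjoint_apply_eq_of_forall_inner_eq_zero {r : V}
    (hr : ∀ v, T v = 0 → ⟪r, v⟫ = 0) : ∃ q, (T†) q = r := by
  obtain ⟨p, hp⟩ := surjective_comp_adjoint hβ hT (T r)
  refine ⟨p, ?_⟩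
  have hker : T ((T†) p - r) = 0 := by rw [map_sub, ← comp_apply, hp, sub_self]
  rw [← sub_eq_zero, ← inner_self_eq_zero (𝕜 := ℝ)]
  nth_rw 1 [inner_sub_left]
  rw [adjoint_inner_left, hker, inner_zero_right, hr _ hker, sub_zero]

end AdjointBoundedBelow

section SaddlePoint

variable {A : V →L[ℝ] V →L[ℝ] ℝ} {B : V →L[ℝ] Q} {α β Ca : ℝ} {f : StrongDual ℝ V}
  {g : StrongDual ℝ Q} {p : V × Q}

lemma IsSaddlePointSol.mul_norm_snd_le (hp : IsSaddlePointSol A B f g p)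
    (hB : ∀ q, β * ‖q‖ ≤ ‖(B†) q‖) (hA : ‖A‖ ≤ Ca) : β * ‖p.2‖ ≤ ‖f‖ + Ca * ‖p.1‖ := by
  have hBp : ‖(B†) p.2‖ = ‖f - A p.1‖ := norm_eq_of_forall_inner_eq fun v => by
    rw [adjoint_inner_left, real_inner_comm, sub_apply, ← hp.1 v, add_sub_cancel_left]
  calc β * ‖p.2‖ ≤ ‖f - A p.1‖ := hBp ▸ hB p.2
    _ ≤ ‖f‖ + ‖A p.1‖ := norm_sub_le _ _
    _ ≤ ‖f‖ + Ca * ‖p.1‖ := by gcongr; exact (A.le_opNorm _).trans (by gcongr)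

variable (hcoer : ∀ v, B v = 0 → α * ‖v‖ ^ 2 ≤ A v v) (hα : 0 < α) (hβ : 0 < β)
  (hB : ∀ q, β * ‖q‖ ≤ ‖(B†) q‖)
include hcoer hα hβ hB

lemma IsSaddlePointSol.mul_norm_fst_le (hp : IsSaddlePointSol A B f g p) (hA : ‖A‖ ≤ Ca) :
    α * β * ‖p.1‖ ≤ (α + β + Ca) * (‖f‖ + ‖g‖) := by
  have hCa : 0 ≤ Ca := (norm_nonneg A).trans hA
  obtain ⟨u₁, hBu₁, hu₁⟩ := exists_apply_eq_and_mul_norm_le hβ hB (B p.1)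
  rw [norm_eq_of_forall_inner_eq hp.2] at hu₁
  set u₂ := p.1 - u₁
  have hu₂ker : B u₂ = 0 := by rw [map_sub, hBu₁, sub_self]
  have hu₂ : α * ‖u₂‖ ≤ ‖f‖ + Ca * ‖u₁‖ := by
    refine mul_le_of_mul_sq_le_mul (norm_nonneg _) (by positivity) ?_
    have hAu : A p.1 u₂ = A u₁ u₂ + A u₂ u₂ := by
      rw [← add_apply, ← map_add, add_sub_cancel]
    have hfu : A p.1 u₂ = f u₂ := by simpa [hu₂ker] using hp.1 u₂
    calc α * ‖u₂‖ ^ 2 ≤ A u₂ u₂ := hcoer u₂ hu₂ker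
      _ = f u₂ - A u₁ u₂ := by linarith
      _ ≤ ‖f‖ * ‖u₂‖ + Ca * ‖u₁‖ * ‖u₂‖ := by
          have hf : f u₂ ≤ ‖f‖ * ‖u₂‖ := (Real.le_norm_self _).trans (f.le_opNorm u₂)
          have hA' : -A u₁ u₂ ≤ Ca * ‖u₁‖ * ‖u₂‖ :=
            (neg_le_abs _).trans ((A.le_opNorm₂ u₁ u₂).trans (by gcongr))
          linarith
      _ = (‖f‖ + Ca * ‖u₁‖) * ‖u₂‖ := by ring
  have hu : ‖p.1‖ ≤ ‖u₁‖ + ‖u₂‖ := by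
    simpa [u₂] using norm_add_le u₁ u₂
  nlinarith [mul_le_mul_of_nonneg_left hu (mul_pos hα hβ).le,
    mul_le_mul_of_nonneg_left hu₂ hβ.le, mul_le_mul_of_nonneg_left hu₁ hCa,
    mul_le_mul_of_nonneg_left hu₁ hα.le, norm_nonneg f, norm_nonneg g]

lemma IsSaddlePointSol.norm_add_norm_le (hp : IsSaddlePointSol A B f g p) (hA : ‖A‖ ≤ Ca) :
    ‖p.1‖ + ‖p.2‖ ≤ saddlePointConst α β Ca * (‖f‖ + ‖g‖) := by
  have hCa : 0 ≤ Ca := (norm_nonneg A).trans hA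
  set M := (α + β + Ca) / (α * β)
  have hu : ‖p.1‖ ≤ M * (‖f‖ + ‖g‖) := by
    rw [div_mul_eq_mul_div, le_div_iff₀ (by positivity), mul_comm]
    exact hp.mul_norm_fst_le hcoer hα hβ hB hA
  have hlam : ‖p.2‖ ≤ (‖f‖ + ‖g‖ + Ca * (M * (‖f‖ + ‖g‖))) / β := by
    rw [le_div_iff₀ hβ]
    nlinarith [hp.mul_norm_snd_le hB hA, mul_le_mul_of_nonneg_left hu hCa, norm_nonneg g]
  calc ‖p.1‖ + ‖p.2‖ ≤ M * (‖f‖ + ‖g‖) + (‖f‖ + ‖g‖ + Ca * (M * (‖f‖ + ‖g‖))) / β :=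
        add_le_add hu hlam
    _ = saddlePointConst α β Ca * (‖f‖ + ‖g‖) := by
        simp only [saddlePointConst, M]
        field_simp
        ring

lemma exists_isSaddlePointSol (f : StrongDual ℝ V) (g : StrongDual ℝ Q) :
    ∃ p, IsSaddlePointSol A B f g p := by
  obtain ⟨u₀, hu₀, -⟩ := exists_apply_eq_and_mul_norm_le hβ hB ((toDual ℝ Q).symm g)
  obtain ⟨w, hw, hwA⟩ := B.ker.exists_mem_forall_apply_eq_of_coercive
    A hα (fun v hv => hcoer v (LinearMap.mem_ker.1 hv)) (f - A u₀)
  obtain ⟨lam, hlam⟩ := exists_adjoint_apply_eq_of_forall_inner_eq_zero hβ hB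
    (r := (toDual ℝ V).symm (f - A (u₀ + w))) fun v hv => by
      rw [toDual_symm_apply, sub_apply, map_add, add_apply, hwA v hv, sub_apply]
      ring
  refine ⟨(u₀ + w, lam), fun v => ?_, fun q => ?_⟩
  · rw [← adjoint_inner_right, hlam, real_inner_comm, toDual_symm_apply, sub_apply]
    ring
  · have hBw : B w = 0 := LinearMap.mem_ker.1 hw
    rw [map_add, hBw, add_zero, hu₀, toDual_symm_apply]

lemma existsUnique_isSaddlePointSol (f : StrongDual ℝ V) (g : StrongDual ℝ Q) :
    ∃! p, IsSaddlePointSol A B f g p := by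
  obtain ⟨p, hp⟩ := exists_isSaddlePointSol hcoer hα hβ hB f g
  refine ⟨p, hp, fun p' hp' => ?_⟩
  have h := (hp'.sub hp).norm_add_norm_le hcoer hα hβ hB le_rfl
  rw [norm_zero, norm_zero, add_zero, mul_zero] at h
  rw [← sub_eq_zero, ← norm_le_zero_iff, Prod.norm_def]
  exact max_le (by linarith [norm_nonneg (p' - p).2]) (by linarith [norm_nonneg (p' - p).1])

end SaddlePoint

end

theorem stmt0_general
    {V Q : Type*} [NormedAddCommGroup V] [InnerProductSpace ℝ V] [CompleteSpace V]
    [NormedAddCommGroup Q] [InnerProductSpace ℝ Q] [CompleteSpace Q]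
    (a : V →ₗ[ℝ] V →ₗ[ℝ] ℝ) (b : V →ₗ[ℝ] Q →ₗ[ℝ] ℝ)
    (Ca : ℝ) (hCa : 0 < Ca) (ha_bdd : ∀ u v, |a u v| ≤ Ca * ‖u‖ * ‖v‖)
    (Cb : ℝ) (hb_bdd : ∀ v q, |b v q| ≤ Cb * ‖v‖ * ‖q‖)
    (α : ℝ) (hα : 0 < α)
    (hcoer : ∀ v : V, (∀ q : Q, b v q = 0) → α * ‖v‖ ^ 2 ≤ a v v)
    (β : ℝ) (hβ : 0 < β)
    (hinfsup : ∀ q : Q, ∃ v : V, v ≠ 0 ∧ β * ‖q‖ * ‖v‖ ≤ b v q) :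
    ∃ C : ℝ, 0 < C ∧ ∀ (f : V →L[ℝ] ℝ) (g : Q →L[ℝ] ℝ),
      (∃! p : V × Q, (∀ v : V, a p.1 v + b v p.2 = f v) ∧ (∀ q : Q, b p.1 q = g q)) ∧
      ∀ (u : V) (lam : Q), (∀ v : V, a u v + b v lam = f v) → (∀ q : Q, b u q = g q) →
        ‖u‖ + ‖lam‖ ≤ C * (‖f‖ + ‖g‖) := by
  set A := a.mkContinuous₂ Ca ha_bdd
  obtain ⟨B, hB⟩ := b.exists_inner_apply_eq_of_bound hb_bdd
  have hsol : ∀ f g p, IsSaddlePointSol A B f g p ↔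
      (∀ v, a p.1 v + b v p.2 = f v) ∧ ∀ q, b p.1 q = g q := by
    intro f g p
    simp only [IsSaddlePointSol, hB]
    rfl
  have hcoerB : ∀ v, B v = 0 → α * ‖v‖ ^ 2 ≤ A v v := fun v hv =>
    hcoer v fun q => by rw [← hB, hv, inner_zero_left]
  have hinfsupB : ∀ q, β * ‖q‖ ≤ ‖(B†) q‖ :=
    norm_adjoint_apply_ge_of_inf_sup fun q => by simpa only [hB] using hinfsup q
  have hA : ‖A‖ ≤ Ca := a.mkContinuous₂_norm_le hCa.le ha_bdd
  refine ⟨_, saddlePointConst_pos hα hβ hCa.le, fun f g => ⟨?_, fun u lam h₁ h₂ => ?_⟩⟩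
  · simpa only [hsol] using existsUnique_isSaddlePointSol hcoerB hα hβ hinfsupB f g
  · exact ((hsol f g (u, lam)).2 ⟨h₁, h₂⟩).norm_add_norm_le hcoerB hα hβ hinfsupB hA

/-- Babuška–Brezzi: existence, uniqueness and stability for the abstract
saddle point problem with kernel ellipticity and inf-sup condition. -/
theorem stmt0
    {V Q : Type*} [NormedAddCommGroup V] [InnerProductSpace ℝ V] [CompleteSpace V]
    [NormedAddCommGroup Q] [InnerProductSpace ℝ Q] [CompleteSpace Q]
    (a : V →ₗ[ℝ] V →ₗ[ℝ] ℝ) (b : V →ₗ[ℝ] Q →ₗ[ℝ] ℝ)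
    (Ca : ℝ) (hCa : 0 < Ca) (ha_bdd : ∀ u v, |a u v| ≤ Ca * ‖u‖ * ‖v‖)
    (ha_symm : ∀ u v, a u v = a v u)
    (Cb : ℝ) (hCb : 0 < Cb) (hb_bdd : ∀ v q, |b v q| ≤ Cb * ‖v‖ * ‖q‖)
    (α : ℝ) (hα : 0 < α)
    (hcoer : ∀ v : V, (∀ q : Q, b v q = 0) → α * ‖v‖ ^ 2 ≤ a v v)
    (β : ℝ) (hβ : 0 < β)
    (hinfsup : ∀ q : Q, ∃ v : V, v ≠ 0 ∧ β * ‖q‖ * ‖v‖ ≤ b v q) :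
    ∃ C : ℝ, 0 < C ∧ ∀ (f : V →L[ℝ] ℝ) (g : Q →L[ℝ] ℝ),
      (∃! p : V × Q, (∀ v : V, a p.1 v + b v p.2 = f v) ∧ (∀ q : Q, b p.1 q = g q)) ∧
      ∀ (u : V) (lam : Q), (∀ v : V, a u v + b v lam = f v) → (∀ q : Q, b u q = g q) →
        ‖u‖ + ‖lam‖ ≤ C * (‖f‖ + ‖g‖) :=
  stmt0_general a b Ca hCa ha_bdd Cb hb_bdd α hα hcoer β hβ hinfsup
end

section
/- Let V_h, Q_h be finite-dimensional subspaces of Hilbert spaces V and Q respectively, a : V × V → ℝ a bounded bilinear form coercive with constant α > 0 on the discrete kernel K_h = {v_h ∈ V_h : b(v_h, q_h) = 0 for all q_h ∈ Q_h}, and b : V × Q → ℝ a bounded bilinear form satisfying the discrete inf-sup condition with constant β > 0 on V_h × Q_h. Let (u, λ) ∈ V × Q solve the continuous saddle point problem and (u_h, λ_h) ∈ V_h × Q_h the corresponding Galerkin discrete problem. Then ‖u − u_h‖_V + ‖λ − λ_h‖_Q ≤ C inf_{v_h ∈ V_h, μ_h ∈ Q_h} (‖u − v_h‖_V + ‖λ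 − μ_h‖_Q), where C depends only on α, β and the continuity constants of a and b. -/
/-!
The discrete inf-sup condition makes `v ↦ b v ·|_Qh` map `Vh` onto the dual of `Qh` with a right
inverse of norm at most `1 / β` (a Fortin lift). Correcting `vh` by the lift of `u - vh` gives
`t ∈ Vh` with `b t = b u` on `Qh`; then `t - uh` lies in the discrete kernel, where coercivity of
`a` and Galerkin orthogonality bound it by `‖u - t‖` and `‖lam - μh‖`. Testing Galerkin
orthogonality against the inf-sup partner of `lamh - μh` bounds the multiplier error by the
velocity error.
-/

open scoped InnerProductSpace

lemma mul_le_of_mul_sq_le {c x K : ℝ} (hx : 0 ≤ x) (hK : 0 ≤ K) (h : c * x ^ 2 ≤ K * x) :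
    c * x ≤ K := by
  rcases hx.eq_or_lt with rfl | hx
  · simpa using hK
  · exact le_of_mul_le_mul_right (by linarith) hx

namespace LinearMap

variable {𝕜 E F : Type*} [RCLike 𝕜] [NormedAddCommGroup E] [InnerProductSpace 𝕜 E]
  [NormedAddCommGroup F] [InnerProductSpace 𝕜 F] [FiniteDimensional 𝕜 E] [FiniteDimensional 𝕜 F]

theorem exists_apply_eq_of_mul_norm_le_norm_adjoint (B : E →ₗ[𝕜] F) {β : ℝ} (hβ : 0 < β)
    (hB : ∀ q, β * ‖q‖ ≤ ‖B.adjoint q‖) (r : F) : ∃ w, B w = r ∧ β * ‖w‖ ≤ ‖r‖ := by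
  have hinj : Function.Injective (B ∘ₗ B.adjoint) := by
    refine (injective_iff_map_eq_zero _).2 fun p hp => ?_
    have hp0 : B.adjoint p = 0 := by
      rw [← inner_self_eq_zero (𝕜 := 𝕜), adjoint_inner_left, ← comp_apply, hp, inner_zero_right]
    exact norm_eq_zero.1 <| le_antisymm
      (le_of_mul_le_mul_left (by simpa [hp0] using hB p) hβ) (norm_nonneg p)
  obtain ⟨p, hp⟩ := injective_iff_surjective.1 hinj r
  refine ⟨B.adjoint p, hp, mul_le_of_mul_sq_le (norm_nonneg _) (norm_nonneg r) ?_⟩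
  calc β * ‖B.adjoint p‖ ^ 2 = β * RCLike.re ⟪p, r⟫_𝕜 := by
        rw [← hp, comp_apply, ← adjoint_inner_left, inner_self_eq_norm_sq]
    _ ≤ β * (‖p‖ * ‖r‖) := by gcongr; exact re_inner_le_norm p r
    _ ≤ ‖r‖ * ‖B.adjoint p‖ := by nlinarith [hB p, norm_nonneg r]

end LinearMap

theorem exists_linearMap_inner_eq {E F : Type*} [AddCommGroup E] [Module ℝ E]
    [NormedAddCommGroup F] [InnerProductSpace ℝ F] [FiniteDimensional ℝ F]
    (b : E →ₗ[ℝ] F →ₗ[ℝ] ℝ) : ∃ B : E →ₗ[ℝ] F, ∀ v q, ⟪B v, q⟫_ℝ = b v q :=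
  ⟨(InnerProductSpace.toDual ℝ F).symm.toLinearEquiv.toLinearMap ∘ₗ
      LinearMap.toContinuousLinearMap.toLinearMap ∘ₗ b,
    fun v q => by simp [InnerProductSpace.toDual_symm_apply]⟩

theorem exists_fortin_lift {V Q : Type*} [NormedAddCommGroup V] [InnerProductSpace ℝ V]
    [NormedAddCommGroup Q] [InnerProductSpace ℝ Q] (Vh : Submodule ℝ V) (Qh : Submodule ℝ Q)
    [FiniteDimensional ℝ Vh] [FiniteDimensional ℝ Qh] (b : V →ₗ[ℝ] Q →ₗ[ℝ] ℝ)
    {Cb : ℝ} (hCb : 0 ≤ Cb) (hb_bdd : ∀ v q, |b v q| ≤ Cb * ‖v‖ * ‖q‖)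
    {β : ℝ} (hβ : 0 < β) (hinfsup : ∀ q ∈ Qh, ∃ v ∈ Vh, v ≠ 0 ∧ β * ‖q‖ * ‖v‖ ≤ b v q)
    (z : V) : ∃ w ∈ Vh, (∀ q ∈ Qh, b w q = b z q) ∧ β * ‖w‖ ≤ Cb * ‖z‖ := by
  obtain ⟨B, hB⟩ := exists_linearMap_inner_eq (b.domRestrict₁₂ Vh Qh)
  have hadj : ∀ q, β * ‖q‖ ≤ ‖B.adjoint q‖ := fun q => by
    obtain ⟨v, hv, hv0, hle⟩ := hinfsup q q.2
    refine le_of_mul_le_mul_right ?_ (norm_pos_iff.2 hv0)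
    calc β * ‖q‖ * ‖v‖ ≤ ⟪(⟨v, hv⟩ : Vh), B.adjoint q⟫_ℝ := by
          rwa [LinearMap.adjoint_inner_right, hB, LinearMap.domRestrict₁₂_apply]
      _ ≤ ‖B.adjoint q‖ * ‖v‖ := by
          rw [mul_comm]; exact real_inner_le_norm _ _
  let ℓ : StrongDual ℝ Qh := LinearMap.toContinuousLinearMap ((b z).domRestrict Qh)
  have hℓ : ‖ℓ‖ ≤ Cb * ‖z‖ := ℓ.opNorm_le_bound (by positivity) fun q =>
    (hb_bdd z q).trans_eq rfl
  obtain ⟨w, hBw, hw⟩ := B.exists_apply_eq_of_mul_norm_le_norm_adjoint hβ hadj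
    ((InnerProductSpace.toDual ℝ Qh).symm ℓ)
  refine ⟨w, w.2, fun q hq => ?_, hw.trans (by simpa using hℓ)⟩
  simpa [hBw, InnerProductSpace.toDual_symm_apply, ℓ, LinearMap.domRestrict₁₂_apply] using
    (hB w ⟨q, hq⟩).symm

section ErrorEstimates

variable {V Q : Type*} [NormedAddCommGroup V] [Module ℝ V] [NormedAddCommGroup Q] [Module ℝ Q]
  {Vh : Submodule ℝ V} {Qh : Submodule ℝ Q} {a : V →ₗ[ℝ] V →ₗ[ℝ] ℝ} {b : V →ₗ[ℝ] Q →ₗ[ℝ] ℝ}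
  {Ca Cb : ℝ} {u uh : V} {lam lamh μh : Q}

theorem norm_sub_le_of_coercive_on_kernel (hCa : 0 ≤ Ca) (hCb : 0 ≤ Cb)
    (ha_bdd : ∀ u v, |a u v| ≤ Ca * ‖u‖ * ‖v‖) (hb_bdd : ∀ v q, |b v q| ≤ Cb * ‖v‖ * ‖q‖)
    {α : ℝ} (hα : 0 < α) (hcoer : ∀ v ∈ Vh, (∀ q ∈ Qh, b v q = 0) → α * ‖v‖ ^ 2 ≤ a v v)
    (hgal : ∀ v ∈ Vh, a (u - uh) v = b v (lamh - lam)) (huh : uh ∈ Vh)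
    (hbuh : ∀ q ∈ Qh, b uh q = b u q) (hlamh : lamh ∈ Qh) (hμh : μh ∈ Qh)
    {t : V} (ht : t ∈ Vh) (hbt : ∀ q ∈ Qh, b t q = b u q) :
    ‖u - uh‖ ≤ (1 + Ca / α) * ‖u - t‖ + Cb / α * ‖lam - μh‖ := by
  have hd : t - uh ∈ Vh := Vh.sub_mem ht huh
  have hdker : ∀ q ∈ Qh, b (t - uh) q = 0 := fun q hq => by
    simp [hbt q hq, hbuh q hq]
  have hsplit : a (t - uh) (t - uh) = b (t - uh) (μh - lam) - a (u - t) (t - uh) := by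
    have h1 := hgal _ hd
    have h2 := hdker _ (Qh.sub_mem hlamh hμh)
    simp only [map_sub, LinearMap.sub_apply] at h1 h2 ⊢
    linarith
  have key : α * ‖t - uh‖ ^ 2 ≤ (Ca * ‖u - t‖ + Cb * ‖lam - μh‖) * ‖t - uh‖ :=
    calc α * ‖t - uh‖ ^ 2 ≤ a (t - uh) (t - uh) := hcoer _ hd hdker
      _ = b (t - uh) (μh - lam) - a (u - t) (t - uh) := hsplit
      _ ≤ Cb * ‖t - uh‖ * ‖μh - lam‖ + Ca * ‖u - t‖ * ‖t - uh‖ := by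
        linarith [le_abs_self (b (t - uh) (μh - lam)), hb_bdd (t - uh) (μh - lam),
          neg_abs_le (a (u - t) (t - uh)), ha_bdd (u - t) (t - uh)]
      _ = (Ca * ‖u - t‖ + Cb * ‖lam - μh‖) * ‖t - uh‖ := by rw [norm_sub_rev μh]; ring
  calc ‖u - uh‖ ≤ ‖u - t‖ + ‖t - uh‖ := norm_sub_le_norm_sub_add_norm_sub _ _ _
    _ ≤ ‖u - t‖ + (Ca * ‖u - t‖ + Cb * ‖lam - μh‖) / α := by
      gcongr
      rw [le_div_iff₀' hα]
      exact mul_le_of_mul_sq_le (norm_nonneg _) (by positivity) key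
    _ = (1 + Ca / α) * ‖u - t‖ + Cb / α * ‖lam - μh‖ := by ring

theorem norm_sub_le_of_infsup (ha_bdd : ∀ u v, |a u v| ≤ Ca * ‖u‖ * ‖v‖)
    (hb_bdd : ∀ v q, |b v q| ≤ Cb * ‖v‖ * ‖q‖)
    {β : ℝ} (hβ : 0 < β) (hinfsup : ∀ q ∈ Qh, ∃ v ∈ Vh, v ≠ 0 ∧ β * ‖q‖ * ‖v‖ ≤ b v q)
    (hgal : ∀ v ∈ Vh, a (u - uh) v = b v (lamh - lam)) (hlamh : lamh ∈ Qh) (hμh : μh ∈ Qh) :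
    ‖lam - lamh‖ ≤ Ca / β * ‖u - uh‖ + (1 + Cb / β) * ‖lam - μh‖ := by
  obtain ⟨v, hv, hv0, hle⟩ := hinfsup _ (Qh.sub_mem hlamh hμh)
  have hsplit : b v (lamh - μh) = a (u - uh) v + b v (lam - μh) := by
    have := hgal v hv
    simp only [map_sub, LinearMap.sub_apply] at this ⊢
    linarith
  have key : β * ‖lamh - μh‖ ≤ Ca * ‖u - uh‖ + Cb * ‖lam - μh‖ := by
    refine le_of_mul_le_mul_right ?_ (norm_pos_iff.2 hv0)
    calc β * ‖lamh - μh‖ * ‖v‖ ≤ b v (lamh - μh) := hle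
      _ = a (u - uh) v + b v (lam - μh) := hsplit
      _ ≤ Ca * ‖u - uh‖ * ‖v‖ + Cb * ‖v‖ * ‖lam - μh‖ :=
        add_le_add ((le_abs_self _).trans (ha_bdd _ _)) ((le_abs_self _).trans (hb_bdd _ _))
      _ = (Ca * ‖u - uh‖ + Cb * ‖lam - μh‖) * ‖v‖ := by ring
  calc ‖lam - lamh‖ ≤ ‖lam - μh‖ + ‖μh - lamh‖ := norm_sub_le_norm_sub_add_norm_sub _ _ _
    _ ≤ ‖lam - μh‖ + (Ca * ‖u - uh‖ + Cb * ‖lam - μh‖) / β := by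
      gcongr
      rw [norm_sub_rev, le_div_iff₀' hβ]
      exact key
    _ = Ca / β * ‖u - uh‖ + (1 + Cb / β) * ‖lam - μh‖ := by ring

end ErrorEstimates

theorem stmt8_general
    {V Q : Type*} [NormedAddCommGroup V] [InnerProductSpace ℝ V]
    [NormedAddCommGroup Q] [InnerProductSpace ℝ Q]
    (Vh : Submodule ℝ V) (Qh : Submodule ℝ Q)
    [FiniteDimensional ℝ Vh] [FiniteDimensional ℝ Qh]
    (a : V →ₗ[ℝ] V →ₗ[ℝ] ℝ) (b : V →ₗ[ℝ] Q →ₗ[ℝ] ℝ)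
    (Ca : ℝ) (hCa : 0 < Ca) (ha_bdd : ∀ u v, |a u v| ≤ Ca * ‖u‖ * ‖v‖)
    (Cb : ℝ) (hCb : 0 < Cb) (hb_bdd : ∀ v q, |b v q| ≤ Cb * ‖v‖ * ‖q‖)
    (α : ℝ) (hα : 0 < α)
    (hcoer : ∀ v ∈ Vh, (∀ q ∈ Qh, b v q = 0) → α * ‖v‖ ^ 2 ≤ a v v)
    (β : ℝ) (hβ : 0 < β)
    (hinfsup : ∀ q ∈ Qh, ∃ v ∈ Vh, v ≠ 0 ∧ β * ‖q‖ * ‖v‖ ≤ b v q) :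
    ∃ C : ℝ, 0 < C ∧
      ∀ (f : V →L[ℝ] ℝ) (g : Q →L[ℝ] ℝ) (u : V) (lam : Q) (uh : V) (lamh : Q),
        uh ∈ Vh → lamh ∈ Qh →
        (∀ v : V, a u v + b v lam = f v) → (∀ q : Q, b u q = g q) →
        (∀ v ∈ Vh, a uh v + b v lamh = f v) → (∀ q ∈ Qh, b uh q = g q) →
        ∀ vh ∈ Vh, ∀ μh ∈ Qh,
          ‖u - uh‖ + ‖lam - lamh‖ ≤ C * (‖u - vh‖ + ‖lam - μh‖) := by
  set Ku := (1 + Ca / β) * ((1 + Ca / α) * (1 + Cb / β))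
  set Kl := (1 + Ca / β) * (Cb / α) + (1 + Cb / β)
  refine ⟨Ku + Kl, by positivity, ?_⟩
  intro f g u lam uh lamh huh hlamh hu_eq hu_con huh_eq huh_con vh hvh μh hμh
  have hgal : ∀ v ∈ Vh, a (u - uh) v = b v (lamh - lam) := fun v hv => by
    simp only [map_sub, LinearMap.sub_apply]
    linarith [hu_eq v, huh_eq v hv]
  have hbuh : ∀ q ∈ Qh, b uh q = b u q := fun q hq => (huh_con q hq).trans (hu_con q).symm
  obtain ⟨w, hw, hbw, hw_le⟩ := exists_fortin_lift Vh Qh b hCb.le hb_bdd hβ hinfsup (u - vh)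
  have hlift : ‖u - (vh + w)‖ ≤ (1 + Cb / β) * ‖u - vh‖ :=
    calc ‖u - (vh + w)‖ ≤ ‖u - vh‖ + ‖w‖ := by rw [← sub_sub]; exact norm_sub_le _ _
      _ ≤ ‖u - vh‖ + Cb / β * ‖u - vh‖ := by
        gcongr
        rw [div_mul_eq_mul_div, le_div_iff₀' hβ]
        exact hw_le
      _ = (1 + Cb / β) * ‖u - vh‖ := by ring
  have hvel := norm_sub_le_of_coercive_on_kernel hCa.le hCb.le ha_bdd hb_bdd hα hcoer hgal huh
    hbuh hlamh hμh (Vh.add_mem hvh hw) fun q hq => by simp [hbw q hq]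
  have hmul := norm_sub_le_of_infsup ha_bdd hb_bdd hβ hinfsup hgal hlamh hμh
  calc ‖u - uh‖ + ‖lam - lamh‖ ≤ (1 + Ca / β) * ‖u - uh‖ + (1 + Cb / β) * ‖lam - μh‖ := by
        linarith
    _ ≤ (1 + Ca / β) * ((1 + Ca / α) * ((1 + Cb / β) * ‖u - vh‖) + Cb / α * ‖lam - μh‖) +
          (1 + Cb / β) * ‖lam - μh‖ := by grw [hvel, hlift]
    _ = Ku * ‖u - vh‖ + Kl * ‖lam - μh‖ := by simp only [Ku, Kl]; ring
    _ ≤ (Ku + Kl) * (‖u - vh‖ + ‖lam - μh‖) := by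
        nlinarith [mul_nonneg (by positivity : 0 ≤ Ku) (norm_nonneg (lam - μh)),
          mul_nonneg (by positivity : 0 ≤ Kl) (norm_nonneg (u - vh))]

/-- Quasi-optimality (Céa-type estimate) for Galerkin approximation of saddle point
problems: under discrete kernel ellipticity and discrete inf-sup condition, the
error of the discrete solution is bounded by a constant (depending only on `α`,
`β` and the continuity constants of `a` and `b`) times the best approximation
error. -/
theorem stmt8
    {V Q : Type*} [NormedAddCommGroup V] [InnerProductSpace ℝ V] [CompleteSpace V]
    [NormedAddCommGroup Q] [InnerProductSpace ℝ Q] [CompleteSpace Q]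
    (Vh : Submodule ℝ V) (Qh : Submodule ℝ Q)
    [FiniteDimensional ℝ Vh] [FiniteDimensional ℝ Qh]
    (a : V →ₗ[ℝ] V →ₗ[ℝ] ℝ) (b : V →ₗ[ℝ] Q →ₗ[ℝ] ℝ)
    (Ca : ℝ) (hCa : 0 < Ca) (ha_bdd : ∀ u v, |a u v| ≤ Ca * ‖u‖ * ‖v‖)
    (Cb : ℝ) (hCb : 0 < Cb) (hb_bdd : ∀ v q, |b v q| ≤ Cb * ‖v‖ * ‖q‖)
    (α : ℝ) (hα : 0 < α)
    (hcoer : ∀ v ∈ Vh, (∀ q ∈ Qh, b v q = 0) → α * ‖v‖ ^ 2 ≤ a v v)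
    (β : ℝ) (hβ : 0 < β)
    (hinfsup : ∀ q ∈ Qh, ∃ v ∈ Vh, v ≠ 0 ∧ β * ‖q‖ * ‖v‖ ≤ b v q) :
    ∃ C : ℝ, 0 < C ∧
      ∀ (f : V →L[ℝ] ℝ) (g : Q →L[ℝ] ℝ) (u : V) (lam : Q) (uh : V) (lamh : Q),
        uh ∈ Vh → lamh ∈ Qh →
        (∀ v : V, a u v + b v lam = f v) → (∀ q : Q, b u q = g q) →
        (∀ v ∈ Vh, a uh v + b v lamh = f v) → (∀ q ∈ Qh, b uh q = g q) →
        ∀ vh ∈ Vh, ∀ μh ∈ Qh,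
          ‖u - uh‖ + ‖lam - lamh‖ ≤ C * (‖u - vh‖ + ‖lam - μh‖) :=
  stmt8_general Vh Qh a b Ca hCa ha_bdd Cb hCb hb_bdd α hα hcoer β hβ hinfsup
end

section
/- Let V be a Hilbert space, a : V × V → ℝ a bounded bilinear form that is coercive (with constant α > 0) on a closed subspace K ⊂ V, and suppose K = ker B where B : V → Q* is the bounded operator associated with a bilinear form b satisfying the inf-sup condition with constant β > 0. Then the homogeneous saddle point problem (a(u,v) + b(v,λ) = 0 for all v, b(u,q) = 0 for all q) has only the trivial solution (u, λ) = (0, 0). -/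
/-! Testing the first equation with `v = u` kills `b u λ`, since `u` lies in the kernel of `b`;
coercivity on that kernel then forces `u = 0`. The first equation now says that `b(·, λ)`
vanishes identically, which the inf-sup condition only allows for `λ = 0`. -/

theorem eq_zero_of_mul_norm_sq_nonpos {E : Type*} [NormedAddCommGroup E] {α : ℝ} (hα : 0 < α)
    {u : E} (h : α * ‖u‖ ^ 2 ≤ 0) : u = 0 := by
  have hsq : ‖u‖ ^ 2 ≤ 0 := nonpos_of_mul_nonpos_right h hα
  exact norm_eq_zero.mp (pow_eq_zero_iff two_ne_zero |>.mp (le_antisymm hsq (by positivity)))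

theorem eq_zero_of_forall_apply_eq_zero_of_infSup {V Q : Type*}
    [NormedAddCommGroup V] [Module ℝ V] [NormedAddCommGroup Q] [Module ℝ Q]
    {b : V →ₗ[ℝ] Q →ₗ[ℝ] ℝ} {β : ℝ} (hβ : 0 < β) {q : Q}
    (hinfsup : ∃ v : V, v ≠ 0 ∧ β * ‖q‖ * ‖v‖ ≤ b v q) (hq : ∀ v, b v q = 0) : q = 0 := by
  obtain ⟨v, hv, hle⟩ := hinfsup
  rw [hq v] at hle
  have hqv : ‖q‖ * ‖v‖ ≤ 0 := nonpos_of_mul_nonpos_right (by linarith) hβ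
  exact norm_eq_zero.mp <| le_antisymm
    (nonpos_of_mul_nonpos_left hqv (norm_pos_iff.mpr hv)) (norm_nonneg q)

theorem stmt17_general {V Q : Type*}
    [NormedAddCommGroup V] [InnerProductSpace ℝ V]
    [NormedAddCommGroup Q] [InnerProductSpace ℝ Q]
    (a : V →ₗ[ℝ] V →ₗ[ℝ] ℝ) (b : V →ₗ[ℝ] Q →ₗ[ℝ] ℝ)
    (α : ℝ) (hα : 0 < α)
    (hcoer : ∀ v : V, (∀ q : Q, b v q = 0) → α * ‖v‖ ^ 2 ≤ a v v)
    (β : ℝ) (hβ : 0 < β)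
    (hinfsup : ∀ q : Q, ∃ v : V, v ≠ 0 ∧ β * ‖q‖ * ‖v‖ ≤ b v q) :
    ∀ (u : V) (lam : Q),
      (∀ v : V, a u v + b v lam = 0) → (∀ q : Q, b u q = 0) →
      u = 0 ∧ lam = 0 := by
  intro u lam hfirst hsecond
  have hu : u = 0 := by
    have hauu : a u u = 0 := by linarith [hfirst u, hsecond lam]
    exact eq_zero_of_mul_norm_sq_nonpos hα (hauu ▸ hcoer u hsecond)
  subst hu
  exact ⟨rfl, eq_zero_of_forall_apply_eq_zero_of_infSup hβ (hinfsup lam)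
    fun v => by simpa using hfirst v⟩

/-- Uniqueness part of the Babuška–Brezzi theorem: if `a` is bounded and coercive
on the kernel `K = ker B` of the bilinear form `b`, and `b` satisfies the inf-sup
condition, then the homogeneous saddle point problem has only the trivial
solution. -/
theorem stmt17 {V Q : Type*}
    [NormedAddCommGroup V] [InnerProductSpace ℝ V] [CompleteSpace V]
    [NormedAddCommGroup Q] [InnerProductSpace ℝ Q] [CompleteSpace Q]
    (a : V →ₗ[ℝ] V →ₗ[ℝ] ℝ) (b : V →ₗ[ℝ] Q →ₗ[ℝ] ℝ)
    (Ca : ℝ) (hCa : 0 < Ca) (ha_bdd : ∀ u v, |a u v| ≤ Ca * ‖u‖ * ‖v‖)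
    (α : ℝ) (hα : 0 < α)
    (hcoer : ∀ v : V, (∀ q : Q, b v q = 0) → α * ‖v‖ ^ 2 ≤ a v v)
    (β : ℝ) (hβ : 0 < β)
    (hinfsup : ∀ q : Q, ∃ v : V, v ≠ 0 ∧ β * ‖q‖ * ‖v‖ ≤ b v q) :
    ∀ (u : V) (lam : Q),
      (∀ v : V, a u v + b v lam = 0) → (∀ q : Q, b u q = 0) →
      u = 0 ∧ lam = 0 :=
  stmt17_general a b α hα hcoer β hβ hinfsup
end
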